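/- If F_X is continuous and (X,Y) has copula C with (U,V) ∼ C, then for all α, β ∈ (0,1), the β-quantile of the conditional distribution of Y given X ≥ VaR_α(X) equals F_Y^←(F_{V|U≥α}^←(β)), where F^← denotes the generalized inverse (left-continuous quantile function). -/

import Mathlib

/-!
Since `F_X` is continuous, `q := VaR_α(X)` satisfies `F_X(q) = α` and `X` has no atom at `q`,
so `P(Y ≤ y, X ≥ q) = F_Y(y) - C(α, F_Y(y))` and `P(X ≥ q) = 1 - α`. The same computation for
`(U, V)` at `α` shows that the law of `Y` given `X ≥ q` has distribution function `G ∘ F_Y` with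
`G = F_{V|U≥α}`. As `G` is nondecreasing and right-continuous, `β ≤ G v ↔ G^←(β) ≤ v`, hence
`(G ∘ F_Y)^←(β) = F_Y^←(G^←(β))`.
-/

open MeasureTheory Set

/-- Generalized inverse (left-continuous quantile function) F^←(p) = inf {x : F x ≥ p}. -/
noncomputable def qf (F : ℝ → ℝ) (p : ℝ) : ℝ := sInf {x | p ≤ F x}

noncomputable def rvCdf {Ω : Type*} [MeasurableSpace Ω] (μ : Measure Ω) (X : Ω → ℝ) (x : ℝ) : ℝ :=
  (μ {ω | X ω ≤ x}).toReal

open Filter Topology ProbabilityTheory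

section Quantile

variable {F G : ℝ → ℝ} {α β : ℝ}

theorem apply_qf_of_continuous (hF : Continuous F) (hbot : Tendsto F atBot (𝓝 0))
    (htop : Tendsto F atTop (𝓝 1)) (hα : α ∈ Ioo (0 : ℝ) 1) : F (qf F α) = α := by
  obtain ⟨a, ha⟩ := eventually_atBot.mp (hbot.eventually (gt_mem_nhds hα.1))
  have hbdd : BddBelow {x | α ≤ F x} :=
    ⟨a, fun x hx => le_of_not_ge fun hxa => (ha x hxa).not_ge hx⟩
  have hne : {x | α ≤ F x}.Nonempty :=
    ((htop.eventually (lt_mem_nhds hα.2)).exists).imp fun _ => le_of_lt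
  refine le_antisymm ?_ ((isClosed_le continuous_const hF).csInf_mem hne hbdd)
  have hleft : Tendsto F (𝓝[<] (qf F α)) (𝓝 (F (qf F α))) :=
    hF.continuousAt.tendsto.mono_left nhdsWithin_le_nhds
  refine le_of_tendsto hleft (eventually_nhdsWithin_of_forall fun x hx => ?_)
  exact le_of_not_ge fun hxα => (not_le.mpr hx) (csInf_le hbdd hxα)

theorem le_apply_iff_qf_le (hG : Monotone G)
    (hrc : ContinuousWithinAt G (Ioi (qf G β)) (qf G β))
    (hne : ∃ v, β ≤ G v) (hbdd : BddBelow {v | β ≤ G v}) (v : ℝ) :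
    β ≤ G v ↔ qf G β ≤ v := by
  refine ⟨fun hv => csInf_le hbdd hv, fun hv => le_trans ?_ (hG hv)⟩
  refine ge_of_tendsto hrc (eventually_nhdsWithin_of_forall fun x hx => ?_)
  obtain ⟨w, hw, hwx⟩ := (csInf_lt_iff hbdd hne).mp hx
  exact hw.trans (hG hwx.le)

theorem qf_comp (hG : Monotone G) (hrc : ContinuousWithinAt G (Ioi (qf G β)) (qf G β))
    (hne : ∃ v, β ≤ G v) (hbdd : BddBelow {v | β ≤ G v}) (F : ℝ → ℝ) :
    qf (G ∘ F) β = qf F (qf G β) :=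
  congrArg sInf (Set.ext fun x => le_apply_iff_qf_le hG hrc hne hbdd (F x))

end Quantile

/-- `F_{Y|A}(y) = P(Y ≤ y | A)`. -/
noncomputable def condRvCdf {Ω : Type*} [MeasurableSpace Ω] (μ : Measure Ω) (Y : Ω → ℝ)
    (A : Set Ω) (y : ℝ) : ℝ :=
  (μ ({ω | Y ω ≤ y} ∩ A)).toReal / (μ A).toReal

section DistributionFunction

variable {Ω : Type*} [MeasurableSpace Ω] {μ : Measure Ω} {X Y : Ω → ℝ} {A : Set Ω}

theorem rvCdf_mem_Icc [IsProbabilityMeasure μ] (x : ℝ) : rvCdf μ X x ∈ Icc (0 : ℝ) 1 :=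
  ⟨ENNReal.toReal_nonneg, measureReal_le_one⟩

theorem rvCdf_mono [IsFiniteMeasure μ] : Monotone (rvCdf μ X) := fun _ _ hxy =>
  ENNReal.toReal_mono (measure_ne_top μ _) (measure_mono fun _ hω => le_trans hω hxy)

theorem rvCdf_eq_cdf_map [IsProbabilityMeasure μ] (hX : Measurable X) :
    rvCdf μ X = cdf (μ.map X) := by
  have := Measure.isProbabilityMeasure_map (μ := μ) hX.aemeasurable
  ext x
  rw [cdf_eq_real, measureReal_def, Measure.map_apply hX measurableSet_Iic]
  rfl

theorem rvCdf_qf_of_continuous [IsProbabilityMeasure μ] (hX : Measurable X)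
    (hF : Continuous (rvCdf μ X)) {α : ℝ} (hα : α ∈ Ioo (0 : ℝ) 1) :
    rvCdf μ X (qf (rvCdf μ X) α) = α := by
  have := Measure.isProbabilityMeasure_map (μ := μ) hX.aemeasurable
  refine apply_qf_of_continuous hF ?_ ?_ hα <;> rw [rvCdf_eq_cdf_map hX]
  exacts [tendsto_cdf_atBot _, tendsto_cdf_atTop _]

theorem measure_eq_zero_of_continuousAt_rvCdf [IsProbabilityMeasure μ] (hX : Measurable X)
    {q : ℝ} (hq : ContinuousAt (rvCdf μ X) q) : μ {ω | X ω = q} = 0 := by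
  have := Measure.isProbabilityMeasure_map (μ := μ) hX.aemeasurable
  have hcont : ContinuousWithinAt (cdf (μ.map X)) (Iic q) q :=
    (rvCdf_eq_cdf_map (μ := μ) hX ▸ hq).continuousWithinAt
  change μ (X ⁻¹' {q}) = 0
  rw [← Measure.map_apply hX (measurableSet_singleton q),
    ← measure_cdf (μ := μ.map X), StieltjesFunction.measure_singleton, hcont.leftLim_eq,
    sub_self, ENNReal.ofReal_zero]

theorem toReal_measure_inter_ge [IsFiniteMeasure μ] (hX : Measurable X) {q : ℝ}
    (hq : μ {ω | X ω = q} = 0) (B : Set Ω) :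
    (μ (B ∩ {ω | q ≤ X ω})).toReal = (μ B).toReal - (μ ({ω | X ω ≤ q} ∩ B)).toReal := by
  have hdiff : B \ {ω | X ω ≤ q} = (B ∩ {ω | q ≤ X ω}) \ {ω | X ω = q} := by
    ext ω
    simp only [Set.mem_sdiff, mem_inter_iff, mem_ofPred_eq, not_le]
    constructor
    · rintro ⟨hB, hlt⟩; exact ⟨⟨hB, hlt.le⟩, hlt.ne'⟩
    · rintro ⟨⟨hB, hle⟩, hne⟩; exact ⟨hB, lt_of_le_of_ne hle (Ne.symm hne)⟩
  have hsplit : μ (B ∩ {ω | X ω ≤ q}) + μ (B \ {ω | X ω ≤ q}) = μ B :=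
    measure_inter_add_sdiff B (hX measurableSet_Iic)
  rw [hdiff, measure_sdiff_null hq, inter_comm] at hsplit
  rw [← hsplit, ENNReal.toReal_add (measure_ne_top μ _) (measure_ne_top μ _)]
  ring

theorem toReal_measure_ge [IsProbabilityMeasure μ] (hX : Measurable X) {q : ℝ}
    (hq : μ {ω | X ω = q} = 0) : (μ {ω | q ≤ X ω}).toReal = 1 - rvCdf μ X q := by
  simpa [rvCdf] using toReal_measure_inter_ge hX hq univ

theorem condRvCdf_ge_eq [IsProbabilityMeasure μ] (hX : Measurable X) {q : ℝ}
    (hq : μ {ω | X ω = q} = 0) (y : ℝ) :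
    condRvCdf μ Y {ω | q ≤ X ω} y =
      (rvCdf μ Y y - (μ {ω | X ω ≤ q ∧ Y ω ≤ y}).toReal) / (1 - rvCdf μ X q) := by
  rw [condRvCdf, toReal_measure_inter_ge hX hq, toReal_measure_ge hX hq]
  rfl

theorem condRvCdf_mono [IsFiniteMeasure μ] : Monotone (condRvCdf μ Y A) := fun _ _ hxy =>
  div_le_div_of_nonneg_right (ENNReal.toReal_mono (measure_ne_top μ _)
    (measure_mono (inter_subset_inter_left _ fun _ hω => le_trans hω hxy))) ENNReal.toReal_nonneg

theorem continuousWithinAt_condRvCdf [IsFiniteMeasure μ] (hY : Measurable Y)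
    (hA : MeasurableSet A) (y : ℝ) : ContinuousWithinAt (condRvCdf μ Y A) (Ioi y) y := by
  have hinter : ⋂ r > y, {ω | Y ω ≤ r} ∩ A = {ω | Y ω ≤ y} ∩ A := by
    ext ω
    simp only [mem_iInter, mem_inter_iff, mem_ofPred_eq]
    refine ⟨fun h => ⟨le_of_forall_gt_imp_ge_of_dense fun r hr => (h r hr).1, ?_⟩,
      fun h r hr => ⟨h.1.trans hr.le, h.2⟩⟩
    exact (h (y + 1) (lt_add_one y)).2
  have hlim := tendsto_measure_biInter_gt (μ := μ) (s := fun r => {ω | Y ω ≤ r} ∩ A) (a := y)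
    (fun r _ => ((hY measurableSet_Iic).inter hA).nullMeasurableSet)
    (fun r s _ hrs => inter_subset_inter_left _ fun _ hω => le_trans hω hrs)
    ⟨y + 1, lt_add_one y, measure_ne_top μ _⟩
  rw [hinter] at hlim
  exact ((ENNReal.tendsto_toReal (measure_ne_top μ _)).comp hlim).div_const _

theorem condRvCdf_eq_zero [IsFiniteMeasure μ] {y : ℝ} (hy : rvCdf μ Y y = 0) :
    condRvCdf μ Y A y = 0 := by
  have hnull : μ {ω | Y ω ≤ y} = 0 := by
    simpa [measure_ne_top] using (ENNReal.toReal_eq_zero_iff _).mp hy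
  rw [condRvCdf, measure_mono_null inter_subset_left hnull, ENNReal.toReal_zero, zero_div]

theorem condRvCdf_eq_one [IsProbabilityMeasure μ] (hY : Measurable Y) (hA : μ A ≠ 0) {y : ℝ}
    (hy : rvCdf μ Y y = 1) : condRvCdf μ Y A y = 1 := by
  have hfull : μ {ω | Y ω ≤ y}ᶜ = 0 :=
    (prob_compl_eq_zero_iff (hY measurableSet_Iic)).mpr (ENNReal.toReal_eq_one_iff _ |>.mp hy)
  rw [condRvCdf, inter_comm, measure_inter_conull hfull,
    div_self (ENNReal.toReal_ne_zero.mpr ⟨hA, measure_ne_top μ A⟩)]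

theorem qf_condRvCdf_comp [IsProbabilityMeasure μ] (hY : Measurable Y) (hA : MeasurableSet A)
    (hA0 : μ A ≠ 0) {a b : ℝ} (ha : rvCdf μ Y a = 0) (hb : rvCdf μ Y b = 1) {β : ℝ}
    (hβ : β ∈ Ioo (0 : ℝ) 1) (F : ℝ → ℝ) :
    qf (condRvCdf μ Y A ∘ F) β = qf F (qf (condRvCdf μ Y A) β) := by
  have hne : ∃ v, β ≤ condRvCdf μ Y A v := ⟨b, (condRvCdf_eq_one hY hA0 hb).symm ▸ hβ.2.le⟩
  have hbdd : BddBelow {v | β ≤ condRvCdf μ Y A v} := by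
    refine ⟨a, fun v hv => le_of_not_gt fun hva => hβ.1.not_ge (hv.trans_eq ?_)⟩
    exact condRvCdf_eq_zero (le_antisymm ((rvCdf_mono hva.le).trans_eq ha) (rvCdf_mem_Icc v).1)
  exact qf_comp condRvCdf_mono (continuousWithinAt_condRvCdf hY hA _) hne hbdd F

end DistributionFunction

theorem covar_copula_representation_general
    {Ω Ω' : Type*} [MeasurableSpace Ω] [MeasurableSpace Ω']
    (μ : Measure Ω) (ν : Measure Ω') [IsProbabilityMeasure μ] [IsProbabilityMeasure ν]
    (X Y : Ω → ℝ) (U V : Ω' → ℝ)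
    (hX : Measurable X) (hU : Measurable U) (hV : Measurable V)
    (C : ℝ → ℝ → ℝ)
    (hFXcont : Continuous (rvCdf μ X))
    (hSklar : ∀ x y, (μ {ω | X ω ≤ x ∧ Y ω ≤ y}).toReal = C (rvCdf μ X x) (rvCdf μ Y y))
    (hUV : ∀ u ∈ Icc (0:ℝ) 1, ∀ v ∈ Icc (0:ℝ) 1,
      (ν {ω | U ω ≤ u ∧ V ω ≤ v}).toReal = C u v)
    (hUunif : ∀ u ∈ Icc (0:ℝ) 1, (ν {ω | U ω ≤ u}).toReal = u)
    (hVunif : ∀ v ∈ Icc (0:ℝ) 1, (ν {ω | V ω ≤ v}).toReal = v)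
    (α β : ℝ) (hα : α ∈ Ioo (0:ℝ) 1) (hβ : β ∈ Ioo (0:ℝ) 1) :
    qf (fun y => (μ ({ω | Y ω ≤ y} ∩ {ω | qf (rvCdf μ X) α ≤ X ω})).toReal /
          (μ {ω | qf (rvCdf μ X) α ≤ X ω}).toReal) β
      = qf (rvCdf μ Y)
          (qf (fun v => (ν ({ω | V ω ≤ v} ∩ {ω | α ≤ U ω})).toReal /
                (ν {ω | α ≤ U ω}).toReal) β) := by
  set q := qf (rvCdf μ X) α
  have hαI : α ∈ Icc (0 : ℝ) 1 := Ioo_subset_Icc_self hα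
  have hFq : rvCdf μ X q = α := rvCdf_qf_of_continuous hX hFXcont hα
  have hFUα : rvCdf ν U α = α := hUunif α hαI
  have hXq : μ {ω | X ω = q} = 0 := measure_eq_zero_of_continuousAt_rvCdf hX hFXcont.continuousAt
  -- `F_U` is the identity on the neighbourhood `[0, 1]` of `α`.
  have hUα : ν {ω | U ω = α} = 0 := measure_eq_zero_of_continuousAt_rvCdf hU <|
    continuousAt_id.congr (mem_of_superset (Icc_mem_nhds hα.1 hα.2) fun u hu => (hUunif u hu).symm)
  have htail : ν {ω | α ≤ U ω} ≠ 0 := fun h => by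
    have := toReal_measure_ge hU hUα
    rw [h, hFUα, ENNReal.toReal_zero] at this
    linarith [hα.2]
  have hcond : ∀ y, condRvCdf μ Y {ω | q ≤ X ω} y =
      condRvCdf ν V {ω | α ≤ U ω} (rvCdf μ Y y) := fun y => by
    have hy := rvCdf_mem_Icc (μ := μ) (X := Y) y
    rw [condRvCdf_ge_eq hX hXq, condRvCdf_ge_eq hU hUα, hSklar, hFq, hFUα, hUV α hαI _ hy,
      show rvCdf ν V (rvCdf μ Y y) = rvCdf μ Y y from hVunif _ hy]
  change qf (condRvCdf μ Y _) β = qf (rvCdf μ Y) (qf (condRvCdf ν V _) β)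
  rw [show condRvCdf μ Y _ = condRvCdf ν V _ ∘ rvCdf μ Y from funext hcond]
  exact qf_condRvCdf_comp hV (hU measurableSet_Ici) htail (hVunif 0 ⟨le_rfl, zero_le_one⟩)
    (hVunif 1 ⟨zero_le_one, le_rfl⟩) hβ _

/-- if F_X is continuous and (X,Y) has copula C with (U,V) ∼ C, then
CoVaR_{α,β}(Y|X), the β-quantile of the law of Y given X ≥ VaR_α(X), equals
F_Y^←(F_{V|U≥α}^←(β)). -/
theorem covar_copula_representation
    {Ω Ω' : Type*} [MeasurableSpace Ω] [MeasurableSpace Ω']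
    (μ : Measure Ω) (ν : Measure Ω') [IsProbabilityMeasure μ] [IsProbabilityMeasure ν]
    (X Y : Ω → ℝ) (U V : Ω' → ℝ)
    (hX : Measurable X) (hY : Measurable Y) (hU : Measurable U) (hV : Measurable V)
    (C : ℝ → ℝ → ℝ)
    (hFXcont : Continuous (rvCdf μ X))
    (hSklar : ∀ x y, (μ {ω | X ω ≤ x ∧ Y ω ≤ y}).toReal = C (rvCdf μ X x) (rvCdf μ Y y))
    (hUV : ∀ u ∈ Icc (0:ℝ) 1, ∀ v ∈ Icc (0:ℝ) 1,
      (ν {ω | U ω ≤ u ∧ V ω ≤ v}).toReal = C u v)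
    (hUunif : ∀ u ∈ Icc (0:ℝ) 1, (ν {ω | U ω ≤ u}).toReal = u)
    (hVunif : ∀ v ∈ Icc (0:ℝ) 1, (ν {ω | V ω ≤ v}).toReal = v)
    (α β : ℝ) (hα : α ∈ Ioo (0:ℝ) 1) (hβ : β ∈ Ioo (0:ℝ) 1) :
    qf (fun y => (μ ({ω | Y ω ≤ y} ∩ {ω | qf (rvCdf μ X) α ≤ X ω})).toReal /
          (μ {ω | qf (rvCdf μ X) α ≤ X ω}).toReal) β
      = qf (rvCdf μ Y)
          (qf (fun v => (ν ({ω | V ω ≤ v} ∩ {ω | α ≤ U ω})).toReal /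
                (ν {ω | α ≤ U ω}).toReal) β) :=
  covar_copula_representation_general μ ν X Y U V hX hU hV C hFXcont hSklar hUV hUunif hVunif α β hα
    hβ
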